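/- arXiv:math/0601103 — 5 statements merged into one kernel-verified Lean document; each statement's English description precedes it below -/
import Mathlib

section
/- Under the standing assumptions on the delay model, suppose additionally that r(t) > b(t) for all t ≥ 0. Let N be a positive solution of the initial value problem on [0, ∞) such that N'(t) > 0 for every t > 0. Then for every t > 0, N(g(t)) < K(t) · (r(t)/b(t) − 1)^{1/γ}, and consequently N(t) ≤ K(t) (r(t)/b(t) − 1)^{1/γ} · exp( ∫_{g(t)}^{t} (r(s) − b(s)) ds ) whenever g(t) ≥ 0. -/
/-!
At a point `t > 0`, `N' t > 0` reads `b < r / (1 + (N (g t) / K)^γ)`, which solves to the first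
bound. Since `N ∘ g ≥ 0`, the factor `1 / (1 + (N ∘ g / K)^γ)` is at most `1`, so
`N' ≤ (r - b) N` on `[0, ∞)`, and Grönwall's inequality on `[g t, t]` gives
`N t ≤ N (g t) · exp (∫_{g t}^t (r - b))`.
-/

open Set MeasureTheory intervalIntegral

theorem lt_mul_rpow_of_lt_div_one_add_rpow {γ r b K y : ℝ} (hγ : 0 < γ) (hb : 0 < b)
    (hK : 0 < K) (hy : 0 ≤ y) (h : b < r / (1 + (y / K) ^ γ)) :
    y < K * (r / b - 1) ^ (1 / γ) := by
  have hx : 0 ≤ (y / K) ^ γ := Real.rpow_nonneg (div_nonneg hy hK.le) γ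
  have hlt : (y / K) ^ γ < r / b - 1 := by
    rw [lt_div_iff₀ (by positivity)] at h
    rw [lt_sub_iff_add_lt', lt_div_iff₀ hb]
    linarith
  have hdiv : y / K < (r / b - 1) ^ (1 / γ) := by
    rw [one_div, Real.lt_rpow_inv_iff_of_pos (div_nonneg hy hK.le) (hx.trans hlt.le) hγ]
    exact hlt
  rwa [div_lt_iff₀' hK] at hdiv

theorem le_mul_exp_integral_of_deriv_le_mul {f f' c : ℝ → ℝ} {a t : ℝ} (hat : a ≤ t)
    (hc : ContinuousOn c (Icc a t)) (hf : ContinuousOn f (Icc a t))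
    (hf' : ∀ s ∈ Ioo a t, HasDerivAt f (f' s) s) (hle : ∀ s ∈ Ioo a t, f' s ≤ c s * f s) :
    f t ≤ f a * Real.exp (∫ s in a..t, c s) := by
  set G : ℝ → ℝ := fun s => ∫ u in a..s, c u
  have hGc : ContinuousOn G (Icc a t) := by
    simpa only [uIcc_of_le hat] using
      continuousOn_primitive_interval (hc.integrableOn_Icc.mono_set (uIcc_of_le hat).subset)
  have hG' : ∀ s ∈ Ioo a t, HasDerivAt G (c s) s := fun s hs =>
    integral_hasDerivAt_right
      ((hc.mono (Icc_subset_Icc_right hs.2.le)).intervalIntegrable_of_Icc hs.1.le)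
      ((hc.mono Ioo_subset_Icc_self).stronglyMeasurableAtFilter isOpen_Ioo s hs)
      (hc.continuousAt (Icc_mem_nhds hs.1 hs.2))
  set F : ℝ → ℝ := fun s => f s * Real.exp (-G s)
  have hF' : ∀ s ∈ Ioo a t, HasDerivAt F ((f' s - c s * f s) * Real.exp (-G s)) s :=
    fun s hs => ((hf' s hs).mul (hG' s hs).neg.exp).congr_deriv (by simp only [Pi.neg_apply]; ring)
  have hF : AntitoneOn F (Icc a t) := by
    refine antitoneOn_of_deriv_nonpos (convex_Icc a t) (hf.mul hGc.neg.rexp) ?_ ?_ <;>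
      rw [interior_Icc]
    · exact fun s hs => (hF' s hs).differentiableAt.differentiableWithinAt
    · intro s hs
      rw [(hF' s hs).deriv]
      exact mul_nonpos_of_nonpos_of_nonneg (sub_nonpos.2 (hle s hs)) (Real.exp_pos _).le
  have hFat : F t ≤ F a := hF (left_mem_Icc.2 hat) (right_mem_Icc.2 hat) hat
  simpa [F, G, Real.exp_neg, ← div_eq_mul_inv, div_le_iff₀ (Real.exp_pos _)] using hFat

theorem getz_ivp_increasing_solution_bound_general
    (γ : ℝ) (hγ : 0 < γ)
    (r b K g φ : ℝ → ℝ)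
    (hrc : ContinuousOn r (Set.Ici 0)) (hbc : ContinuousOn b (Set.Ici 0))
    (hrpos : ∀ t ≥ (0 : ℝ), 0 < r t)
    (b₀ : ℝ) (hb₀ : 0 < b₀) (hb : ∀ t ≥ (0 : ℝ), b₀ ≤ b t)
    (k : ℝ) (hk : 0 < k) (hKk : ∀ t ≥ (0 : ℝ), k ≤ K t)
    (hg : ∀ t, g t ≤ t)
    (hφpos : ∀ t < (0 : ℝ), 0 ≤ φ t)
    -- `N` is a positive solution of the IVP on `[0, ∞)`, with derivative `N'`
    (N N' : ℝ → ℝ)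
    (hphi : ∀ t < (0 : ℝ), N t = φ t)
    (hderiv : ∀ t ∈ Set.Ici (0 : ℝ), HasDerivWithinAt N (N' t) (Set.Ici 0) t)
    (heq : ∀ t ∈ Set.Ici (0 : ℝ),
      N' t = r t * N t / (1 + (N (g t) / K t) ^ γ) - b t * N t)
    (hpos : ∀ t ≥ (0 : ℝ), 0 < N t)
    -- `N` is strictly increasing on `(0, ∞)`
    (hinc : ∀ t > (0 : ℝ), 0 < N' t) :
    ∀ t > (0 : ℝ),
      N (g t) < K t * (r t / b t - 1) ^ (1 / γ) ∧
      (0 ≤ g t → N t ≤ K t * (r t / b t - 1) ^ (1 / γ) *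
        Real.exp (∫ s in g t..t, (r s - b s))) := by
  intro t ht
  have hNg : ∀ s, 0 ≤ N (g s) := fun s => by
    rcases lt_or_ge (g s) 0 with hneg | hnonneg
    · exact hphi _ hneg ▸ hφpos _ hneg
    · exact (hpos _ hnonneg).le
  have hK : ∀ s ≥ (0 : ℝ), 0 < K s := fun s hs => hk.trans_le (hKk s hs)
  have hgrowth : ∀ s ≥ (0 : ℝ), N' s ≤ (r s - b s) * N s := fun s hs => by
    rw [heq s hs, sub_mul]
    gcongr
    exact div_le_self (mul_nonneg (hrpos s hs).le (hpos s hs).le)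
      (le_add_of_nonneg_right (Real.rpow_nonneg (div_nonneg (hNg s) (hK s hs).le) γ))
  have hfirst : N (g t) < K t * (r t / b t - 1) ^ (1 / γ) := by
    refine lt_mul_rpow_of_lt_div_one_add_rpow hγ (hb₀.trans_le (hb t ht.le)) (hK t ht.le)
      (hNg t) (lt_of_mul_lt_mul_right ?_ (hpos t ht.le).le)
    have := hinc t ht
    rw [heq t ht.le, mul_div_right_comm] at this
    linarith
  refine ⟨hfirst, fun hgt => ?_⟩
  have hsub : Icc (g t) t ⊆ Ici 0 := fun s hs => hgt.trans hs.1
  calc N t ≤ N (g t) * Real.exp (∫ s in g t..t, (r s - b s)) :=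
        le_mul_exp_integral_of_deriv_le_mul (hg t) ((hrc.sub hbc).mono hsub)
          ((HasDerivWithinAt.continuousOn hderiv).mono hsub)
          (fun s hs => (hderiv s (hsub (Ioo_subset_Icc_self hs))).hasDerivAt
            (Ici_mem_nhds (hgt.trans_lt hs.1)))
          (fun s hs => hgrowth s (hsub (Ioo_subset_Icc_self hs)))
    _ ≤ K t * (r t / b t - 1) ^ (1 / γ) * Real.exp (∫ s in g t..t, (r s - b s)) := by
        gcongr

/-- If a positive global solution is strictly increasing (`N'(t) > 0` for all `t > 0`), then
`N(g(t)) < K(t)(r(t)/b(t) − 1)^{1/γ}` for all `t > 0`, and consequently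
`N(t) ≤ K(t)(r(t)/b(t) − 1)^{1/γ} · exp(∫_{g(t)}^t (r − b))` whenever `g(t) ≥ 0`. -/
theorem getz_ivp_increasing_solution_bound
    (γ : ℝ) (hγ : 0 < γ)
    (r b K g φ : ℝ → ℝ) (N₀ : ℝ)
    (hrc : ContinuousOn r (Set.Ici 0)) (hbc : ContinuousOn b (Set.Ici 0))
    (hKc : ContinuousOn K (Set.Ici 0))
    (hrpos : ∀ t ≥ (0 : ℝ), 0 < r t)
    (b₀ : ℝ) (hb₀ : 0 < b₀) (hb : ∀ t ≥ (0 : ℝ), b₀ ≤ b t)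
    (k : ℝ) (hk : 0 < k) (hKk : ∀ t ≥ (0 : ℝ), k ≤ K t)
    (hgc : Continuous g) (hg : ∀ t, g t ≤ t)
    (hgtop : ∀ M : ℝ, ∃ᶠ t in Filter.atTop, M ≤ g t)
    (hφc : ContinuousOn φ (Set.Iio 0)) (hφbd : ∃ C, ∀ t < (0 : ℝ), |φ t| ≤ C)
    (hφpos : ∀ t < (0 : ℝ), 0 ≤ φ t)
    (hN₀ : 0 < N₀)
    (hrb : ∀ t ≥ (0 : ℝ), b t < r t)
    -- `N` is a positive solution of the IVP on `[0, ∞)`, with derivative `N'`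
    (N N' : ℝ → ℝ)
    (hNc : Continuous N)
    (hphi : ∀ t < (0 : ℝ), N t = φ t)
    (hN0 : N 0 = N₀)
    (hderiv : ∀ t ∈ Set.Ici (0 : ℝ), HasDerivWithinAt N (N' t) (Set.Ici 0) t)
    (hN'c : ContinuousOn N' (Set.Ici 0))
    (heq : ∀ t ∈ Set.Ici (0 : ℝ),
      N' t = r t * N t / (1 + (N (g t) / K t) ^ γ) - b t * N t)
    (hpos : ∀ t ≥ (0 : ℝ), 0 < N t)
    -- `N` is strictly increasing on `(0, ∞)`
    (hinc : ∀ t > (0 : ℝ), 0 < N' t) :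
    ∀ t > (0 : ℝ),
      N (g t) < K t * (r t / b t - 1) ^ (1 / γ) ∧
      (0 ≤ g t → N t ≤ K t * (r t / b t - 1) ^ (1 / γ) *
        Real.exp (∫ s in g t..t, (r s - b s))) :=
  getz_ivp_increasing_solution_bound_general γ hγ r b K g φ hrc hbc hrpos b₀ hb₀ hb k hk hKk hg
    hφpos N N' hphi hderiv heq hpos hinc
end

section
/- Under the standing assumptions on the delay model, suppose additionally that r(t) > b(t) for all t ≥ 0. Let N be a positive solution of the initial value problem on [0, ∞) such that N'(t) < 0 for every t > 0. Then for every t > 0, N(g(t)) > K(t) · (r(t)/b(t) − 1)^{1/γ}, and consequently N(t) ≥ K(t) (r(t)/b(t) − 1)^{1/γ} · exp( − ∫_{g(t)}^{t} b(s) ds ) whenever g(t) ≥ 0. -/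
/-- If a positive global solution is strictly decreasing (`N'(t) < 0` for all `t > 0`), then
`N(g(t)) > K(t)(r(t)/b(t) − 1)^{1/γ}` for all `t > 0`, and consequently
`N(t) ≥ K(t)(r(t)/b(t) − 1)^{1/γ} · exp(−∫_{g(t)}^t b)` whenever `g(t) ≥ 0`. -/
theorem getz_ivp_decreasing_solution_bound
    (γ : ℝ) (hγ : 0 < γ)
    (r b K g φ : ℝ → ℝ) (N₀ : ℝ)
    (hrc : ContinuousOn r (Set.Ici 0)) (hbc : ContinuousOn b (Set.Ici 0))
    (hKc : ContinuousOn K (Set.Ici 0))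
    (hrpos : ∀ t ≥ (0 : ℝ), 0 < r t)
    (b₀ : ℝ) (hb₀ : 0 < b₀) (hb : ∀ t ≥ (0 : ℝ), b₀ ≤ b t)
    (k : ℝ) (hk : 0 < k) (hKk : ∀ t ≥ (0 : ℝ), k ≤ K t)
    (hgc : Continuous g) (hg : ∀ t, g t ≤ t)
    (hgtop : ∀ M : ℝ, ∃ᶠ t in Filter.atTop, M ≤ g t)
    (hφc : ContinuousOn φ (Set.Iio 0)) (hφbd : ∃ C, ∀ t < (0 : ℝ), |φ t| ≤ C)
    (hφpos : ∀ t < (0 : ℝ), 0 ≤ φ t)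
    (hN₀ : 0 < N₀)
    (hrb : ∀ t ≥ (0 : ℝ), b t < r t)
    -- `N` is a positive solution of the IVP on `[0, ∞)`, with derivative `N'`
    (N N' : ℝ → ℝ)
    (hNc : Continuous N)
    (hphi : ∀ t < (0 : ℝ), N t = φ t)
    (hN0 : N 0 = N₀)
    (hderiv : ∀ t ∈ Set.Ici (0 : ℝ), HasDerivWithinAt N (N' t) (Set.Ici 0) t)
    (hN'c : ContinuousOn N' (Set.Ici 0))
    (heq : ∀ t ∈ Set.Ici (0 : ℝ),
      N' t = r t * N t / (1 + (N (g t) / K t) ^ γ) - b t * N t)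
    (hpos : ∀ t ≥ (0 : ℝ), 0 < N t)
    -- `N` is strictly decreasing on `(0, ∞)`
    (hdec : ∀ t > (0 : ℝ), N' t < 0) :
    ∀ t > (0 : ℝ),
      K t * (r t / b t - 1) ^ (1 / γ) < N (g t) ∧
      (0 ≤ g t → K t * (r t / b t - 1) ^ (1 / γ) *
        Real.exp (-∫ s in g t..t, b s) ≤ N t) := by
  -- nonnegativity of N everywhere
  have hNnn : ∀ s : ℝ, 0 ≤ N s := by
    intro s
    rcases lt_or_ge s 0 with hs | hs
    · rw [hphi s hs]; exact hφpos s hs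
    · exact (hpos s hs).le
  -- basic positivity facts
  have hbpos : ∀ t ≥ (0 : ℝ), 0 < b t := fun t ht => lt_of_lt_of_le hb₀ (hb t ht)
  have hKpos : ∀ t ≥ (0 : ℝ), 0 < K t := fun t ht => lt_of_lt_of_le hk (hKk t ht)
  -- Part 1
  have part1 : ∀ t > (0 : ℝ), K t * (r t / b t - 1) ^ (1 / γ) < N (g t) := by
    intro t ht
    have ht0 : (0 : ℝ) ≤ t := ht.le
    set q : ℝ := N (g t) / K t with hq
    have hqnn : 0 ≤ q := div_nonneg (hNnn _) (hKpos t ht0).le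
    have hD : (0 : ℝ) < 1 + q ^ γ := by positivity
    have h1 : r t * N t / (1 + q ^ γ) - b t * N t < 0 := by
      rw [← heq t ht0]; exact hdec t ht
    have h2 : r t * N t < b t * N t * (1 + q ^ γ) := by
      rw [sub_neg] at h1
      exact (div_lt_iff₀ hD).mp h1
    have hNt := hpos t ht0
    have h3 : r t < b t * (1 + q ^ γ) := by
      have := (mul_lt_mul_iff_left₀ hNt).mp (by linarith [h2] : r t * N t < b t * (1 + q ^ γ) * N t)
      exact this
    have hbt := hbpos t ht0
    have h4 : r t / b t - 1 < q ^ γ := by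
      have : r t / b t < 1 + q ^ γ := (div_lt_iff₀ hbt).mpr (by linarith [h3])
      linarith
    have hcpos : 0 < r t / b t - 1 := by
      have := hrb t ht0
      have : 1 < r t / b t := (one_lt_div hbt).mpr this
      linarith
    have h5 : (r t / b t - 1) ^ (1 / γ) < q := by
      have := Real.rpow_lt_rpow hcpos.le h4 (by positivity : (0:ℝ) < 1 / γ)
      rw [one_div]
      rwa [one_div, Real.rpow_rpow_inv hqnn (ne_of_gt hγ)] at this
    have hKt := hKpos t ht0
    calc K t * (r t / b t - 1) ^ (1 / γ) < K t * q := by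
          exact (mul_lt_mul_iff_right₀ hKt).mpr h5
      _ = N (g t) := by rw [hq, mul_div_assoc']; exact mul_div_cancel_left₀ _ hKt.ne'
  -- Part 2 preparation: the function F s = N s * exp (∫_0^s b) is monotone on [0,∞)
  set B : ℝ → ℝ := fun s => ∫ x in (0:ℝ)..s, b x with hB
  have hint : ∀ s ≥ (0:ℝ), IntervalIntegrable b MeasureTheory.volume 0 s := by
    intro s hs
    exact (hbc.mono (by rw [Set.uIcc_of_le hs]; exact fun x hx => hx.1)).intervalIntegrable
  have hBderiv : ∀ s ≥ (0:ℝ), HasDerivWithinAt B (b s) (Set.Ici s) s := by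
    intro s hs
    apply intervalIntegral.integral_hasDerivWithinAt_right (hint s hs)
      (t := Set.Ioi s)
    · exact ⟨Set.Ici 0, Filter.mem_of_superset self_mem_nhdsWithin
        (fun x hx => le_of_lt (lt_of_le_of_lt hs hx)),
        (hbc.aestronglyMeasurable measurableSet_Ici)⟩
    · exact ((hbc s hs).mono (fun x (hx : x ∈ Set.Ioi s) => le_of_lt (lt_of_le_of_lt hs hx)))
  have hBderiv' : ∀ s > (0:ℝ), HasDerivAt B (b s) s := by
    intro s hs
    have hmem : Set.Ici (0:ℝ) ∈ nhds s := Filter.mem_of_superset (Ioi_mem_nhds hs) Set.Ioi_subset_Ici_self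
    exact intervalIntegral.integral_hasDerivAt_right (hint s hs.le)
      ⟨Set.Ici 0, hmem, hbc.aestronglyMeasurable measurableSet_Ici⟩
      (hbc.continuousAt hmem)
  have hBcont : ContinuousOn B (Set.Ici 0) := by
    intro s hs
    rcases eq_or_lt_of_le (Set.mem_Ici.mp hs) with h0 | h0
    · have := (hBderiv s hs).continuousWithinAt
      rw [← h0]
      rwa [← h0] at this
    · exact (hBderiv' s h0).continuousAt.continuousWithinAt
  set F : ℝ → ℝ := fun s => N s * Real.exp (B s) with hF
  have hFmono : MonotoneOn F (Set.Ici 0) := by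
    apply monotoneOn_of_hasDerivWithinAt_nonneg (convex_Ici 0)
      (f' := fun s => N' s * Real.exp (B s) + N s * (Real.exp (B s) * b s))
    · exact hNc.continuousOn.mul (hBcont.rexp)
    · intro x hx
      rw [interior_Ici] at hx ⊢
      exact ((hderiv x (Set.mem_Ici.mpr (le_of_lt hx))).mono Set.Ioi_subset_Ici_self).mul
        (((hBderiv' x hx).exp).hasDerivWithinAt)
    · intro x hx
      rw [interior_Ici] at hx
      have hx0 : (0:ℝ) ≤ x := hx.le
      have hqnn : 0 ≤ N (g x) / K x := div_nonneg (hNnn _) (hKpos x hx0).le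
      have hD : (0 : ℝ) < 1 + (N (g x) / K x) ^ γ := by positivity
      have hsum : 0 ≤ N' x + b x * N x := by
        rw [heq x hx0]
        have : 0 ≤ r x * N x / (1 + (N (g x) / K x) ^ γ) :=
          div_nonneg (mul_nonneg (hrpos x hx0).le (hNnn x)) hD.le
        linarith
      have hexp : 0 < Real.exp (B x) := Real.exp_pos _
      nlinarith [hNnn x, hsum, hexp]
  intro t ht
  refine ⟨part1 t ht, fun hgt => ?_⟩
  have hFle : F (g t) ≤ F t := hFmono hgt (le_of_lt ht) (hg t)
  have hsub : B t - B (g t) = ∫ s in g t..t, b s := by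
    rw [hB]
    exact intervalIntegral.integral_interval_sub_left (hint t ht.le) (hint (g t) hgt)
  have hexpgt : 0 < Real.exp (B (g t)) := Real.exp_pos _
  have key : N (g t) * Real.exp (-∫ s in g t..t, b s) ≤ N t := by
    have : N (g t) * Real.exp (B (g t)) * Real.exp (-(B t)) ≤ N t * Real.exp (B t) * Real.exp (-(B t)) :=
      mul_le_mul_of_nonneg_right hFle (Real.exp_pos _).le
    rw [mul_assoc, ← Real.exp_add, mul_assoc, ← Real.exp_add, add_neg_cancel, Real.exp_zero,
      mul_one] at this
    rw [show B (g t) + -B t = -(B t - B (g t)) by ring, hsub] at this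
    exact this
  calc K t * (r t / b t - 1) ^ (1 / γ) * Real.exp (-∫ s in g t..t, b s)
      ≤ N (g t) * Real.exp (-∫ s in g t..t, b s) :=
        mul_le_mul_of_nonneg_right (part1 t ht).le (Real.exp_pos _).le
    _ ≤ N t := key
end

section
/- Under the standing assumptions on the delay model, suppose additionally that r(t) > b(t) for all t ≥ 0. Let N be a positive solution of the initial value problem on [0, ∞) and let t₀ > 0 be a point with g(t₀) ≥ 0 at which N attains a local maximum (so that N'(t₀) = 0). Then N(t₀) ≤ K(t₀) · (r(t₀)/b(t₀) − 1)^{1/γ} · exp( ∫_{g(t₀)}^{t₀} (r(s) − b(s)) ds ). -/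
/-- At a local maximum point `t₀ > 0` (with `g(t₀) ≥ 0` and `N'(t₀) = 0`) of a positive
global solution, `N(t₀) ≤ K(t₀)(r(t₀)/b(t₀) − 1)^{1/γ} · exp(∫_{g(t₀)}^{t₀} (r − b))`. -/
theorem getz_ivp_local_max_bound
    (γ : ℝ) (hγ : 0 < γ)
    (r b K g φ : ℝ → ℝ) (N₀ : ℝ)
    (hrc : ContinuousOn r (Set.Ici 0)) (hbc : ContinuousOn b (Set.Ici 0))
    (hKc : ContinuousOn K (Set.Ici 0))
    (hrpos : ∀ t ≥ (0 : ℝ), 0 < r t)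
    (b₀ : ℝ) (hb₀ : 0 < b₀) (hb : ∀ t ≥ (0 : ℝ), b₀ ≤ b t)
    (k : ℝ) (hk : 0 < k) (hKk : ∀ t ≥ (0 : ℝ), k ≤ K t)
    (hgc : Continuous g) (hg : ∀ t, g t ≤ t)
    (hgtop : ∀ M : ℝ, ∃ᶠ t in Filter.atTop, M ≤ g t)
    (hφc : ContinuousOn φ (Set.Iio 0)) (hφbd : ∃ C, ∀ t < (0 : ℝ), |φ t| ≤ C)
    (hφpos : ∀ t < (0 : ℝ), 0 ≤ φ t)
    (hN₀ : 0 < N₀)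
    (hrb : ∀ t ≥ (0 : ℝ), b t < r t)
    -- `N` is a positive solution of the IVP on `[0, ∞)`, with derivative `N'`
    (N N' : ℝ → ℝ)
    (hNc : Continuous N)
    (hphi : ∀ t < (0 : ℝ), N t = φ t)
    (hN0 : N 0 = N₀)
    (hderiv : ∀ t ∈ Set.Ici (0 : ℝ), HasDerivWithinAt N (N' t) (Set.Ici 0) t)
    (hN'c : ContinuousOn N' (Set.Ici 0))
    (heq : ∀ t ∈ Set.Ici (0 : ℝ),
      N' t = r t * N t / (1 + (N (g t) / K t) ^ γ) - b t * N t)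
    (hpos : ∀ t ≥ (0 : ℝ), 0 < N t)
    -- the local maximum point
    (t₀ : ℝ) (ht₀ : 0 < t₀) (hgt₀ : 0 ≤ g t₀)
    (hmax : IsLocalMax N t₀) (hcrit : N' t₀ = 0) :
    N t₀ ≤ K t₀ * (r t₀ / b t₀ - 1) ^ (1 / γ) *
      Real.exp (∫ s in g t₀..t₀, (r s - b s)) := by

  have hgt : g t₀ ≤ t₀ := hg t₀
  have hKpos : 0 < K t₀ := lt_of_lt_of_le hk (hKk _ ht₀.le)
  have hbpos : 0 < b t₀ := lt_of_lt_of_le hb₀ (hb _ ht₀.le)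
  have hNpos : 0 < N t₀ := hpos _ ht₀.le
  have hNgpos : 0 < N (g t₀) := hpos _ hgt₀
  -- value at the critical point
  have he := heq t₀ (by exact ht₀.le)
  rw [hcrit] at he
  set x := (N (g t₀) / K t₀) ^ γ with hxdef
  have hxnn : 0 ≤ x := Real.rpow_nonneg (div_nonneg hNgpos.le hKpos.le) _
  have h1x : 0 < 1 + x := by linarith
  have hmul : r t₀ * N t₀ = (b t₀ * (1 + x)) * N t₀ := by
    have h : r t₀ * N t₀ / (1 + x) = b t₀ * N t₀ := by linarith
    field_simp at h
    rw [h]; ring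
  have hrbx : r t₀ = b t₀ * (1 + x) := mul_right_cancel₀ hNpos.ne' hmul
  have hxval : x = r t₀ / b t₀ - 1 := by
    field_simp
    linarith [hrbx]
  have hNg : N (g t₀) = K t₀ * (r t₀ / b t₀ - 1) ^ (1 / γ) := by
    have hbase : ((N (g t₀) / K t₀) ^ γ) ^ (1 / γ) = N (g t₀) / K t₀ := by
      rw [← Real.rpow_mul (div_nonneg hNgpos.le hKpos.le), mul_one_div,
        div_self hγ.ne', Real.rpow_one]
    rw [← hxval, hxdef, hbase]
    field_simp
  -- the Grönwall-type estimate
  have hsub : Set.Icc (g t₀) t₀ ⊆ Set.Ici (0 : ℝ) := fun s hs => le_trans hgt₀ hs.1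
  have hLcont : ContinuousOn (fun t => Real.log (N t)) (Set.Icc (g t₀) t₀) :=
    ContinuousOn.log hNc.continuousOn (fun s hs => (hpos s (hsub hs)).ne')
  have hLderiv : ∀ s ∈ Set.Ioo (g t₀) t₀,
      HasDerivWithinAt (fun t => Real.log (N t)) (N' s / N s) (Set.Ioi s) s := by
    intro s hs
    have h0 : (0 : ℝ) ≤ s := le_trans hgt₀ hs.1.le
    exact ((hderiv s h0).log (hpos s h0).ne').mono
      (fun y hy => le_trans h0 (le_of_lt hy))
  have hLcont' : ContinuousOn (fun s => N' s / N s) (Set.Icc (g t₀) t₀) :=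
    (hN'c.mono hsub).div (hNc.continuousOn.mono hsub)
      (fun s hs => (hpos s (hsub hs)).ne')
  have hint : IntervalIntegrable (fun s => N' s / N s) MeasureTheory.volume (g t₀) t₀ := by
    apply ContinuousOn.intervalIntegrable
    rwa [Set.uIcc_of_le hgt]
  have hint2 : IntervalIntegrable (fun s => r s - b s) MeasureTheory.volume (g t₀) t₀ := by
    apply ContinuousOn.intervalIntegrable
    rw [Set.uIcc_of_le hgt]
    exact (hrc.mono hsub).sub (hbc.mono hsub)
  have hftc : ∫ s in g t₀..t₀, N' s / N s =
      Real.log (N t₀) - Real.log (N (g t₀)) :=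
    intervalIntegral.integral_eq_sub_of_hasDeriv_right_of_le hgt hLcont hLderiv hint
  have hptwise : ∀ s ∈ Set.Icc (g t₀) t₀, N' s / N s ≤ r s - b s := by
    intro s hs
    have h0 : (0 : ℝ) ≤ s := hsub hs
    have hNs : 0 < N s := hpos s h0
    have hKs : 0 < K s := lt_of_lt_of_le hk (hKk s h0)
    have hNgs : 0 ≤ N (g s) := by
      rcases lt_or_ge (g s) 0 with hlt | hge
      · rw [hphi _ hlt]; exact hφpos _ hlt
      · exact (hpos _ hge).le
    have hy : 0 ≤ (N (g s) / K s) ^ γ := Real.rpow_nonneg (div_nonneg hNgs hKs.le) _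
    have h1y : (1 : ℝ) ≤ 1 + (N (g s) / K s) ^ γ := by linarith
    have hrNs : 0 ≤ r s * N s := mul_nonneg (hrpos s h0).le hNs.le
    have hdivle : r s * N s / (1 + (N (g s) / K s) ^ γ) ≤ r s * N s :=
      div_le_self hrNs h1y
    rw [heq s h0, div_le_iff₀ hNs]
    nlinarith [hdivle]
  have hIle : ∫ s in g t₀..t₀, N' s / N s ≤ ∫ s in g t₀..t₀, (r s - b s) :=
    intervalIntegral.integral_mono_on hgt hint hint2 hptwise
  have hlog : Real.log (N t₀) ≤ Real.log (N (g t₀)) + ∫ s in g t₀..t₀, (r s - b s) := by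
    rw [hftc] at hIle; linarith
  calc N t₀ = Real.exp (Real.log (N t₀)) := (Real.exp_log hNpos).symm
    _ ≤ Real.exp (Real.log (N (g t₀)) + ∫ s in g t₀..t₀, (r s - b s)) :=
        Real.exp_le_exp.mpr hlog
    _ = N (g t₀) * Real.exp (∫ s in g t₀..t₀, (r s - b s)) := by
        rw [Real.exp_add, Real.exp_log hNgpos]
    _ = K t₀ * (r t₀ / b t₀ - 1) ^ (1 / γ) * Real.exp (∫ s in g t₀..t₀, (r s - b s)) := by
        rw [hNg]
end

section
/- Under the standing assumptions on the delay model, suppose additionally that r(t) > b(t) for all t ≥ 0. Let N be a positive solution of the initial value problem on [0, ∞) and let τ₀ > 0 be a point with g(τ₀) ≥ 0 at which N attains a local minimum (so that N'(τ₀) = 0). Then N(τ₀) ≥ K(τ₀) · (r(τ₀)/b(τ₀) − 1)^{1/γ} · exp( − ∫_{g(τ₀)}^{τ₀} b(s) ds ). -/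
/-- At a local minimum point `τ₀ > 0` (with `g(τ₀) ≥ 0` and `N'(τ₀) = 0`) of a positive
global solution, `N(τ₀) ≥ K(τ₀)(r(τ₀)/b(τ₀) − 1)^{1/γ} · exp(−∫_{g(τ₀)}^{τ₀} b)`. -/
theorem getz_ivp_local_min_bound
    (γ : ℝ) (hγ : 0 < γ)
    (r b K g φ : ℝ → ℝ) (N₀ : ℝ)
    (hrc : ContinuousOn r (Set.Ici 0)) (hbc : ContinuousOn b (Set.Ici 0))
    (hKc : ContinuousOn K (Set.Ici 0))
    (hrpos : ∀ t ≥ (0 : ℝ), 0 < r t)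
    (b₀ : ℝ) (hb₀ : 0 < b₀) (hb : ∀ t ≥ (0 : ℝ), b₀ ≤ b t)
    (k : ℝ) (hk : 0 < k) (hKk : ∀ t ≥ (0 : ℝ), k ≤ K t)
    (hgc : Continuous g) (hg : ∀ t, g t ≤ t)
    (hgtop : ∀ M : ℝ, ∃ᶠ t in Filter.atTop, M ≤ g t)
    (hφc : ContinuousOn φ (Set.Iio 0)) (hφbd : ∃ C, ∀ t < (0 : ℝ), |φ t| ≤ C)
    (hφpos : ∀ t < (0 : ℝ), 0 ≤ φ t)
    (hN₀ : 0 < N₀)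
    (hrb : ∀ t ≥ (0 : ℝ), b t < r t)
    -- `N` is a positive solution of the IVP on `[0, ∞)`, with derivative `N'`
    (N N' : ℝ → ℝ)
    (hNc : Continuous N)
    (hphi : ∀ t < (0 : ℝ), N t = φ t)
    (hN0 : N 0 = N₀)
    (hderiv : ∀ t ∈ Set.Ici (0 : ℝ), HasDerivWithinAt N (N' t) (Set.Ici 0) t)
    (hN'c : ContinuousOn N' (Set.Ici 0))
    (heq : ∀ t ∈ Set.Ici (0 : ℝ),
      N' t = r t * N t / (1 + (N (g t) / K t) ^ γ) - b t * N t)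
    (hpos : ∀ t ≥ (0 : ℝ), 0 < N t)
    -- the local minimum point
    (τ₀ : ℝ) (hτ₀ : 0 < τ₀) (hgτ₀ : 0 ≤ g τ₀)
    (hmin : IsLocalMin N τ₀) (hcrit : N' τ₀ = 0) :
    K τ₀ * (r τ₀ / b τ₀ - 1) ^ (1 / γ) *
      Real.exp (-∫ s in g τ₀..τ₀, b s) ≤ N τ₀ := by
  -- b extended continuously to all of ℝ
  set bt : ℝ → ℝ := fun t => b (max t 0) with hbt
  have hbtc : Continuous bt := by
    apply hbc.comp_continuous (continuous_id.max continuous_const)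
    intro x; exact Set.mem_Ici.2 (le_max_right _ _)
  have hbt_eq : ∀ t ≥ (0:ℝ), bt t = b t := fun t ht => by
    simp [hbt, max_eq_left ht]
  -- the integral of bt
  set B : ℝ → ℝ := fun t => ∫ s in (0:ℝ)..t, bt s with hB
  have hBd : ∀ t : ℝ, HasDerivAt B (bt t) t := fun t =>
    (hbtc.integral_hasStrictDerivAt 0 t).hasDerivAt
  have hBc : Continuous B := continuous_iff_continuousAt.2 fun t => (hBd t).continuousAt
  -- N(g t) ≥ 0 for all t
  have hNg : ∀ t : ℝ, 0 ≤ N t := by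
    intro t
    rcases lt_or_ge t 0 with h | h
    · rw [hphi t h]; exact hφpos t h
    · exact (hpos t h).le
  -- the auxiliary monotone function
  have hmono : MonotoneOn (fun t => N t * Real.exp (B t)) (Set.Ici 0) := by
    apply monotoneOn_of_hasDerivWithinAt_nonneg (convex_Ici 0)
      (f' := fun t => (N' t + b t * N t) * Real.exp (B t))
    · exact (hNc.mul (Real.continuous_exp.comp hBc)).continuousOn
    · intro x hx
      rw [interior_Ici] at hx
      have hx0 : (0:ℝ) ≤ x := le_of_lt hx
      have h1 : HasDerivWithinAt N (N' x) (interior (Set.Ici 0)) x := by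
        rw [interior_Ici]
        exact (hderiv x hx0).mono Set.Ioi_subset_Ici_self
      have h3 : HasDerivWithinAt (fun t => Real.exp (B t)) (Real.exp (B x) * bt x)
          (interior (Set.Ici 0)) x :=
        (Real.hasDerivAt_exp (B x)).comp_hasDerivWithinAt x (hBd x).hasDerivWithinAt
      have := h1.mul h3
      refine this.congr_deriv ?_
      beta_reduce
      rw [hbt_eq x hx0]; ring
    · intro x hx
      rw [interior_Ici] at hx
      have hx0 : (0:ℝ) ≤ x := le_of_lt hx
      have hsum : N' x + b x * N x = r x * N x / (1 + (N (g x) / K x) ^ γ) := by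
        rw [heq x hx0]; ring
      apply mul_nonneg _ (Real.exp_pos _).le
      rw [hsum]
      apply div_nonneg (mul_nonneg (hrpos x hx0).le (hNg x))
      have : (0:ℝ) ≤ (N (g x) / K x) ^ γ :=
        Real.rpow_nonneg (div_nonneg (hNg _) (hk.le.trans (hKk x hx0))) _
      linarith
  have hτ0 : (0:ℝ) ≤ τ₀ := hτ₀.le
  have hKτ : 0 < K τ₀ := hk.trans_le (hKk τ₀ hτ0)
  have hbτ : 0 < b τ₀ := hb₀.trans_le (hb τ₀ hτ0)
  have hNτ : 0 < N τ₀ := hpos τ₀ hτ0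
  set X : ℝ := (N (g τ₀) / K τ₀) ^ γ with hXdef
  have hXnn : 0 ≤ X := Real.rpow_nonneg (div_nonneg (hNg _) hKτ.le) _
  -- value of N at g τ₀ from the critical point equation
  have hX : X = r τ₀ / b τ₀ - 1 := by
    have h := heq τ₀ hτ0
    rw [hcrit] at h
    have hden : (0:ℝ) < 1 + X := by linarith
    have h2 : r τ₀ * N τ₀ = b τ₀ * N τ₀ * (1 + X) := by
      have h1 : r τ₀ * N τ₀ / (1 + X) = b τ₀ * N τ₀ := by
        rw [hXdef]; linarith
      field_simp at h1
      rw [h1]; ring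
    have h3 : r τ₀ = b τ₀ * (1 + X) := by
      have := mul_right_cancel₀ hNτ.ne' (by linarith [h2] : r τ₀ * N τ₀ = b τ₀ * (1 + X) * N τ₀)
      exact this
    field_simp [h3]
    linarith [h3]
  have hval : K τ₀ * (r τ₀ / b τ₀ - 1) ^ (1 / γ) = N (g τ₀) := by
    rw [← hX, hXdef, one_div,
      Real.rpow_rpow_inv (div_nonneg (hNg _) hKτ.le) hγ.ne']
    field_simp
  -- the integral identity
  have hii : ∀ a c : ℝ, IntervalIntegrable bt MeasureTheory.volume a c :=
    fun a c => hbtc.intervalIntegrable a c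
  have hI : ∫ s in g τ₀..τ₀, b s = B τ₀ - B (g τ₀) := by
    have h1 : B τ₀ - B (g τ₀) = ∫ s in g τ₀..τ₀, bt s :=
      intervalIntegral.integral_interval_sub_left (hii 0 τ₀) (hii 0 (g τ₀))
    rw [h1]
    apply intervalIntegral.integral_congr
    intro x hx
    rw [Set.uIcc_of_le (hg τ₀)] at hx
    exact (hbt_eq x (le_trans hgτ₀ hx.1)).symm
  -- apply monotonicity
  have hm := hmono (Set.mem_Ici.2 hgτ₀) (Set.mem_Ici.2 hτ0) (hg τ₀)
  simp only at hm
  rw [hval, hI]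
  calc N (g τ₀) * Real.exp (-(B τ₀ - B (g τ₀)))
      = (N (g τ₀) * Real.exp (B (g τ₀))) / Real.exp (B τ₀) := by
        rw [neg_sub, Real.exp_sub]; ring
    _ ≤ (N τ₀ * Real.exp (B τ₀)) / Real.exp (B τ₀) := by
        gcongr
    _ = N τ₀ := by
        field_simp
end

section
/- Let γ > 0 and let b, K, r : ℝ → ℝ be functions with b(t) > 0, K(t) > 0, r(t) > 0, and r(t) > b(t) for all t. Define G(t, u) = b(t) − r(t)/(1 + (u/K(t))^γ), and suppose m := inf_{t} ( (r(t)/b(t) − 1) K(t)^γ ) > 1 and B := (1/γ) · sup_{t} ln( (r(t)/b(t) − 1) K(t)^γ ) < ∞. Then B > 0, and for every real x with |x| > B and every t one has x · G(t, e^x) > 0; moreover, for every real x and every t one has G(t, e^x) ≥ b(t) − r(t). -/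
/-!
Put `c t = (r t / b t - 1) K(t)^γ`. Clearing denominators,
`G(t, eˣ) = b(t) (e^{γx} - c t) / (K(t)^γ + e^{γx})`, so `x G(t, eˣ)` has the sign of
`x (e^{γx} - c t)`. Since `c t > 1`, this is positive for `x < 0`, and for `x > 0` it is
positive as soon as `γ x > log (c t)`, which `x > B` guarantees.
-/

open Real

/-- Below a nonnegative bound the junk value `0` of an unbounded infimum cannot occur. -/
lemma Real.lt_of_nonneg_of_lt_iInf {ι : Type*} {f : ι → ℝ} {a : ℝ} (ha : 0 ≤ a)
    (h : a < ⨅ i, f i) (i : ι) : a < f i := by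
  have hf : BddBelow (Set.range f) := by
    by_contra hf
    rw [Real.iInf_of_not_bddBelow hf] at h
    linarith
  exact h.trans_le (ciInf_le hf i)

lemma lt_of_one_lt_div_sub_one_mul {b r k : ℝ} (hb : 0 < b) (hk : 0 < k)
    (h : 1 < (r / b - 1) * k) : b < r := by
  have : 0 < r / b - 1 := pos_of_mul_pos_left (one_pos.trans h) hk.le
  exact (one_lt_div hb).1 (by linarith)

lemma sub_div_one_add_rpow_exp_div_eq {b r k γ : ℝ} (hb : 0 < b) (hk : 0 < k) (x : ℝ) :
    b - r / (1 + (exp x / k) ^ γ) =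
      b * (exp (γ * x) - (r / b - 1) * k ^ γ) / (k ^ γ + exp (γ * x)) := by
  have hkγ : 0 < k ^ γ := rpow_pos_of_pos hk γ
  rw [div_rpow (exp_pos x).le hk.le, ← exp_mul, mul_comm x γ]
  field_simp
  ring

lemma mul_exp_mul_sub_pos {c γ x : ℝ} (hc : 1 < c) (hx : log c < γ * |x|) :
    0 < x * (exp (γ * x) - c) := by
  rcases lt_trichotomy x 0 with hneg | rfl | hpos
  · have : γ * x < 0 := by
      rw [abs_of_neg hneg] at hx
      linarith [log_pos hc]
    have : exp (γ * x) < 1 := exp_lt_one_iff.2 this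
    exact mul_pos_of_neg_of_neg hneg (by linarith)
  · simp only [abs_zero, mul_zero] at hx
    exact absurd hx (log_pos hc).not_gt
  · rw [abs_of_pos hpos] at hx
    have : c < exp (γ * x) := (log_lt_iff_lt_exp (one_pos.trans hc)).1 hx
    exact mul_pos hpos (by linarith)

lemma sub_le_sub_div_one_add {b r s : ℝ} (hr : 0 ≤ r) (hs : 0 ≤ s) :
    b - r ≤ b - r / (1 + s) :=
  sub_le_sub_left (div_le_self hr (by linarith)) b

theorem getz_sign_conditions_b1_general
    (γ : ℝ) (hγ : 0 < γ)
    (b K r : ℝ → ℝ)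
    (hbpos : ∀ t, 0 < b t) (hKpos : ∀ t, 0 < K t)
    (hm : (1 : ℝ) < ⨅ t : ℝ, (r t / b t - 1) * K t ^ γ)
    (hbdd : BddAbove (Set.range fun t : ℝ => Real.log ((r t / b t - 1) * K t ^ γ))) :
    (0 : ℝ) < (1 / γ) * ⨆ t : ℝ, Real.log ((r t / b t - 1) * K t ^ γ) ∧
    (∀ (t x : ℝ), (1 / γ) * (⨆ s : ℝ, Real.log ((r s / b s - 1) * K s ^ γ)) < |x| →
      0 < x * (b t - r t / (1 + (Real.exp x / K t) ^ γ))) ∧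
    (∀ (t x : ℝ), b t - r t ≤ b t - r t / (1 + (Real.exp x / K t) ^ γ)) := by
  have hc : ∀ t, 1 < (r t / b t - 1) * K t ^ γ := Real.lt_of_nonneg_of_lt_iInf zero_le_one hm
  have hKγ : ∀ t, 0 < K t ^ γ := fun t => rpow_pos_of_pos (hKpos t) γ
  have hlog_le : ∀ t, log ((r t / b t - 1) * K t ^ γ) ≤ _ := le_ciSup hbdd
  refine ⟨mul_pos (by positivity) ((log_pos (hc 0)).trans_le (hlog_le 0)), ?_, ?_⟩
  · intro t x hx
    have hγx : log ((r t / b t - 1) * K t ^ γ) < γ * |x| := by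
      rw [one_div_mul_eq_div, div_lt_iff₀' hγ] at hx
      exact (hlog_le t).trans_lt hx
    rw [sub_div_one_add_rpow_exp_div_eq (hbpos t) (hKpos t), mul_div_assoc', mul_left_comm]
    exact div_pos (mul_pos (hbpos t) (mul_exp_mul_sub_pos (hc t) hγx))
      (add_pos (hKγ t) (exp_pos _))
  · intro t x
    have hrb := lt_of_one_lt_div_sub_one_mul (hbpos t) (hKγ t) (hc t)
    exact sub_le_sub_div_one_add ((hbpos t).trans hrb).le
      (rpow_nonneg (div_pos (exp_pos x) (hKpos t)).le γ)

/-- Verification of the sign conditions of the Li–Kuang lemma under condition (b1):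
with `G(t,u) = b(t) − r(t)/(1 + (u/K(t))^γ)`, if
`m := inf_t (r(t)/b(t) − 1) K(t)^γ > 1` and
`B := (1/γ)·sup_t ln((r(t)/b(t) − 1) K(t)^γ)` is finite (the sup set is bounded above),
then `B > 0`, `x·G(t, eˣ) > 0` whenever `|x| > B`, and `G(t, eˣ) ≥ b(t) − r(t)` always. -/
theorem getz_sign_conditions_b1
    (γ : ℝ) (hγ : 0 < γ)
    (b K r : ℝ → ℝ)
    (hbpos : ∀ t, 0 < b t) (hKpos : ∀ t, 0 < K t) (hrpos : ∀ t, 0 < r t)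
    (hrb : ∀ t, b t < r t)
    (hm : (1 : ℝ) < ⨅ t : ℝ, (r t / b t - 1) * K t ^ γ)
    (hbdd : BddAbove (Set.range fun t : ℝ => Real.log ((r t / b t - 1) * K t ^ γ))) :
    (0 : ℝ) < (1 / γ) * ⨆ t : ℝ, Real.log ((r t / b t - 1) * K t ^ γ) ∧
    (∀ (t x : ℝ), (1 / γ) * (⨆ s : ℝ, Real.log ((r s / b s - 1) * K s ^ γ)) < |x| →
      0 < x * (b t - r t / (1 + (Real.exp x / K t) ^ γ))) ∧
    (∀ (t x : ℝ), b t - r t ≤ b t - r t / (1 + (Real.exp x / K t) ^ γ)) :=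
  getz_sign_conditions_b1_general γ hγ b K r hbpos hKpos hm hbdd
end
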